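/- arXiv:1402.1973 — 2 statements merged into one kernel-verified Lean document; each statement's English description precedes it below -/
import Mathlib

section
/- Let L : ℝ → ℝ and q : ℝ → ℝ be convex functions and let ν ≥ 0. Then the objective function of problem (P), namely F(U, v) = Σ_{i=1}^m L(y_i · Σ_{j=1}^N s_j · q(⟨u_j, x_i⟩ − v_j)) + (ν/2)·‖v‖₂², is a DC function on ℝ^{n×N} × ℝ^N: there exist convex functions g, h : ℝ^{n×N} × ℝ^N → ℝ such that F(U, v) = g(U, v) − h(U, v) for all (U, v). -/
/-!
Subtracting a supporting line at `0` from a convex `q : ℝ → ℝ` leaves a nonnegative convex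
function, so `y i * ∑ j, s j * q (⟨u j, x i⟩ - v j)` has the form `P - N + A` with `P`, `N`
nonnegative convex and `A` affine (split every coefficient as `a = a⁺ - a⁻`). Doing the same to
`L` and cutting at `0` writes `L t = φ t + ψ (-t) + c t - L 0` with `φ`, `ψ` convex and
nondecreasing. For such `φ`, convex `X` and nonnegative convex `Y`, both `φ (X + Y)` and
`φ (X - Y) + φ (X + Y)` are convex, the latter because `b ↦ φ (a - b) + φ (a + b)` is even and
convex, hence nondecreasing on `b ≥ 0`. So `φ (X - Y)` is DC, and applying this to
`φ ((P + A) - N)` and `ψ ((N - A) - P)` shows that `L (P - N + A)` is DC.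
-/

open Set

theorem ConvexOn.exists_forall_add_mul_sub_le {f : ℝ → ℝ} (hf : ConvexOn ℝ univ f) (x : ℝ) :
    ∃ c, ∀ t, f x + c * (t - x) ≤ f t := by
  have hx : x ∈ interior univ := by simp
  refine ⟨derivWithin f (Ioi x) x, fun t => ?_⟩
  rcases lt_trichotomy t x with htx | rfl | hxt
  · have h := (hf.slope_le_leftDeriv_of_mem_interior (mem_univ t) hx htx).trans
      (hf.leftDeriv_le_rightDeriv_of_mem_interior hx)
    rw [slope_def_field, div_le_iff₀ (sub_pos.2 htx)] at h
    linarith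
  · simp
  · have h := hf.rightDeriv_le_slope_of_mem_interior hx (mem_univ t) hxt
    rw [slope_def_field, le_div_iff₀ (sub_pos.2 hxt)] at h
    linarith

theorem ConvexOn.monotoneOn_Ici_of_isMinOn {f : ℝ → ℝ} (hf : ConvexOn ℝ univ f) {a : ℝ}
    (hmin : IsMinOn f univ a) : MonotoneOn f (Ici a) := fun s hs t _ hst =>
  calc f s ≤ max (f a) (f t) :=
        hf.le_on_segment (mem_univ a) (mem_univ t) <| by
          rw [segment_eq_Icc (hs.trans hst)]; exact ⟨hs, hst⟩
    _ = f t := max_eq_right (isMinOn_univ_iff.1 hmin t)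

theorem ConvexOn.comp_max_of_isMinOn {f : ℝ → ℝ} (hf : ConvexOn ℝ univ f) {a : ℝ}
    (hmin : IsMinOn f univ a) :
    ConvexOn ℝ univ (fun t => f (max t a)) ∧ Monotone fun t => f (max t a) := by
  have hmono := hf.monotoneOn_Ici_of_isMinOn hmin
  have himage : (fun t => max t a) '' univ = Ici a := by
    ext t
    refine ⟨?_, fun ht => ⟨t, trivial, max_eq_left ht⟩⟩
    rintro ⟨s, -, rfl⟩
    exact le_max_right s a
  refine ⟨?_, fun s t hst =>
    hmono (le_max_right s a) (le_max_right t a) (max_le_max_right a hst)⟩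
  refine ConvexOn.comp (g := f) (f := fun t => max t a) ?_ ?_ (himage ▸ hmono)
  · exact himage ▸ hf.subset (subset_univ _) (convex_Ici a)
  · exact (convexOn_id convex_univ).sup (convexOn_const a convex_univ)

theorem ConvexOn.exists_monotone_decomposition {L : ℝ → ℝ} (hL : ConvexOn ℝ univ L) :
    ∃ (φ ψ : ℝ → ℝ) (c : ℝ), ConvexOn ℝ univ φ ∧ Monotone φ ∧
      ConvexOn ℝ univ ψ ∧ Monotone ψ ∧ ∀ t, L t = φ t + ψ (-t) + c * t - L 0 := by
  obtain ⟨c, hc⟩ := hL.exists_forall_add_mul_sub_le 0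
  set L₀ : ℝ → ℝ := fun t => L t - c * t
  have hL₀ : ConvexOn ℝ univ L₀ :=
    hL.sub ((LinearMap.mul ℝ ℝ c).concaveOn convex_univ)
  have hL₀' : ConvexOn ℝ univ fun t => L₀ (-t) := by
    have h := hL₀.comp_linearMap (-LinearMap.id)
    rwa [preimage_univ] at h
  have hmin : IsMinOn L₀ univ 0 := isMinOn_univ_iff.2 fun t => by
    simp only [L₀]; linarith [hc t]
  have hmin' : IsMinOn (fun t => L₀ (-t)) univ 0 :=
    isMinOn_univ_iff.2 fun t => by simpa using isMinOn_univ_iff.1 hmin (-t)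
  obtain ⟨hφ, hφm⟩ := hL₀.comp_max_of_isMinOn hmin
  obtain ⟨hψ, hψm⟩ := hL₀'.comp_max_of_isMinOn hmin'
  refine ⟨_, _, c, hφ, hφm, hψ, hψm, fun t => ?_⟩
  rcases le_total t 0 with ht | ht
  · simp only [L₀, max_eq_right ht, max_eq_left (neg_nonneg.2 ht), neg_neg, mul_zero, sub_zero]
    ring
  · simp only [L₀, max_eq_left ht, max_eq_right (neg_nonpos.2 ht), neg_zero, mul_zero, sub_zero]
    ring

theorem ConvexOn.monotoneOn_sub_add {φ : ℝ → ℝ} (hφ : ConvexOn ℝ univ φ) (a : ℝ) :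
    MonotoneOn (fun b => φ (a - b) + φ (a + b)) (Ici 0) := by
  have hplus : ConvexOn ℝ univ fun b => φ (a + b) := by
    have h := hφ.translate_right a
    rwa [preimage_univ] at h
  have hminus : ConvexOn ℝ univ fun b => φ (a - b) := by
    have h := hφ.comp_affineMap (AffineMap.const ℝ ℝ a - AffineMap.id ℝ ℝ)
    rwa [preimage_univ] at h
  intro b (hb : 0 ≤ b) B _ hbB
  have hseg : b ∈ segment ℝ (-B) B := by
    rw [segment_eq_Icc (by linarith)]
    exact ⟨by linarith, hbB⟩
  calc φ (a - b) + φ (a + b)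
      ≤ max (φ (a - -B) + φ (a + -B)) (φ (a - B) + φ (a + B)) :=
        (hminus.add hplus).le_on_segment (mem_univ _) (mem_univ _) hseg
    _ = φ (a - B) + φ (a + B) := by
        rw [sub_neg_eq_add, ← sub_eq_add_neg, add_comm (φ (a + B)), max_self]

section DC

variable {E F : Type*} [AddCommGroup E] [Module ℝ E] [AddCommGroup F] [Module ℝ F]

def IsDC (f : E → ℝ) : Prop :=
  ∃ g h : E → ℝ, ConvexOn ℝ univ g ∧ ConvexOn ℝ univ h ∧ f = g - h

namespace IsDC

lemma of_convexOn {f : E → ℝ} (hf : ConvexOn ℝ univ f) : IsDC f :=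
  ⟨f, 0, hf, convexOn_const 0 convex_univ, (sub_zero f).symm⟩

lemma add {f f' : E → ℝ} (hf : IsDC f) (hf' : IsDC f') : IsDC fun z => f z + f' z := by
  obtain ⟨g, h, hg, hh, rfl⟩ := hf
  obtain ⟨g', h', hg', hh', rfl⟩ := hf'
  refine ⟨g + g', h + h', hg.add hg', hh.add hh', ?_⟩
  ext z
  simp only [Pi.sub_apply, Pi.add_apply]
  ring

lemma const_mul {f : E → ℝ} (hf : IsDC f) (c : ℝ) : IsDC fun z => c * f z := by
  obtain ⟨g, h, hg, hh, rfl⟩ := hf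
  refine ⟨fun z => c⁺ * g z + c⁻ * h z, fun z => c⁺ * h z + c⁻ * g z,
    (hg.smul (posPart_nonneg c)).add (hh.smul (negPart_nonneg c)),
    (hh.smul (posPart_nonneg c)).add (hg.smul (negPart_nonneg c)), ?_⟩
  ext z
  simp only [Pi.sub_apply]
  linear_combination (g z - h z) * (posPart_sub_negPart c).symm

lemma sum {ι : Type*} (t : Finset ι) {f : ι → E → ℝ} (hf : ∀ i ∈ t, IsDC (f i)) :
    IsDC fun z => ∑ i ∈ t, f i z := by
  classical
  induction t using Finset.induction_on with
  | empty => simpa using of_convexOn (convexOn_const (0 : ℝ) convex_univ)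
  | insert i t hi ih =>
    simp_rw [Finset.sum_insert hi]
    exact (hf i (Finset.mem_insert_self i t)).add
      (ih fun j hj => hf j (Finset.mem_insert_of_mem hj))

end IsDC

lemma AffineMap.convexOn (A : E →ᵃ[ℝ] ℝ) : ConvexOn ℝ univ A := by
  simpa using (convexOn_id convex_univ).comp_affineMap A

lemma AffineMap.concaveOn (A : E →ᵃ[ℝ] ℝ) : ConcaveOn ℝ univ A := by
  simpa using (concaveOn_id convex_univ).comp_affineMap A

lemma Monotone.convexOn_comp {φ : ℝ → ℝ} (hφm : Monotone φ) (hφ : ConvexOn ℝ univ φ)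
    {f : E → ℝ} (hf : ConvexOn ℝ univ f) : ConvexOn ℝ univ fun z => φ (f z) :=
  ⟨convex_univ, fun _ _ _ _ _ _ ha hb hab =>
    (hφm (hf.2 trivial trivial ha hb hab)).trans (hφ.2 trivial trivial ha hb hab)⟩

theorem Monotone.convexOn_comp_sub_add_comp_add {φ : ℝ → ℝ} (hφm : Monotone φ)
    (hφ : ConvexOn ℝ univ φ) {X Y : E → ℝ} (hX : ConvexOn ℝ univ X) (hY : ConvexOn ℝ univ Y)
    (hY₀ : 0 ≤ Y) : ConvexOn ℝ univ fun z => φ (X z - Y z) + φ (X z + Y z) := by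
  refine ⟨convex_univ, fun z₁ _ z₂ _ a b ha hb hab => ?_⟩
  have hXz := hX.2 (mem_univ z₁) (mem_univ z₂) ha hb hab
  have hYz := hY.2 (mem_univ z₁) (mem_univ z₂) ha hb hab
  have hsub := hφ.2 (mem_univ (X z₁ - Y z₁)) (mem_univ (X z₂ - Y z₂)) ha hb hab
  have hadd := hφ.2 (mem_univ (X z₁ + Y z₁)) (mem_univ (X z₂ + Y z₂)) ha hb hab
  simp only [smul_eq_mul] at hXz hYz hsub hadd ⊢
  set z := a • z₁ + b • z₂
  set X' := a * X z₁ + b * X z₂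
  set Y' := a * Y z₁ + b * Y z₂
  calc φ (X z - Y z) + φ (X z + Y z)
      ≤ φ (X' - Y z) + φ (X' + Y z) := add_le_add (hφm (by linarith)) (hφm (by linarith))
    _ ≤ φ (X' - Y') + φ (X' + Y') :=
        hφ.monotoneOn_sub_add X' (hY₀ _) ((hY₀ _).trans hYz) hYz
    _ ≤ a * (φ (X z₁ - Y z₁) + φ (X z₁ + Y z₁)) +
          b * (φ (X z₂ - Y z₂) + φ (X z₂ + Y z₂)) := by
        have hsub' : X' - Y' = a * (X z₁ - Y z₁) + b * (X z₂ - Y z₂) := by ring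
        have hadd' : X' + Y' = a * (X z₁ + Y z₁) + b * (X z₂ + Y z₂) := by ring
        rw [hsub', hadd']
        linarith

theorem Monotone.isDC_comp_sub {φ : ℝ → ℝ} (hφm : Monotone φ) (hφ : ConvexOn ℝ univ φ)
    {X Y : E → ℝ} (hX : ConvexOn ℝ univ X) (hY : ConvexOn ℝ univ Y) (hY₀ : 0 ≤ Y) :
    IsDC fun z => φ (X z - Y z) :=
  ⟨_, _, hφm.convexOn_comp_sub_add_comp_add hφ hX hY hY₀, hφm.convexOn_comp hφ (hX.add hY),
    by ext z; simp⟩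

/-- The DC functions `g - h` in which `g` and `h` are bounded below by affine functions. -/
def IsDCWithAffineMinorants (f : E → ℝ) : Prop :=
  ∃ (P N : E → ℝ) (A : E →ᵃ[ℝ] ℝ), ConvexOn ℝ univ P ∧ ConvexOn ℝ univ N ∧ 0 ≤ P ∧ 0 ≤ N ∧
    f = P - N + A

namespace IsDCWithAffineMinorants

lemma isDC {f : E → ℝ} (hf : IsDCWithAffineMinorants f) : IsDC f := by
  obtain ⟨P, N, A, hP, hN, -, -, rfl⟩ := hf
  exact ⟨P + A, N, hP.add A.convexOn, hN, by abel⟩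

lemma add {f f' : E → ℝ} (hf : IsDCWithAffineMinorants f) (hf' : IsDCWithAffineMinorants f') :
    IsDCWithAffineMinorants fun z => f z + f' z := by
  obtain ⟨P, N, A, hP, hN, hP₀, hN₀, rfl⟩ := hf
  obtain ⟨P', N', A', hP', hN', hP₀', hN₀', rfl⟩ := hf'
  refine ⟨P + P', N + N', A + A', hP.add hP', hN.add hN', add_nonneg hP₀ hP₀',
    add_nonneg hN₀ hN₀', ?_⟩
  ext z
  simp only [Pi.add_apply, Pi.sub_apply, AffineMap.coe_add]
  ring

lemma const_mul {f : E → ℝ} (hf : IsDCWithAffineMinorants f) (c : ℝ) :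
    IsDCWithAffineMinorants fun z => c * f z := by
  obtain ⟨P, N, A, hP, hN, hP₀, hN₀, rfl⟩ := hf
  have hc_pos := posPart_nonneg c
  have hc_neg := negPart_nonneg c
  refine ⟨fun z => c⁺ * P z + c⁻ * N z, fun z => c⁺ * N z + c⁻ * P z, c • A,
    (hP.smul hc_pos).add (hN.smul hc_neg), (hN.smul hc_pos).add (hP.smul hc_neg),
    fun z => add_nonneg (mul_nonneg hc_pos (hP₀ z)) (mul_nonneg hc_neg (hN₀ z)),
    fun z => add_nonneg (mul_nonneg hc_pos (hN₀ z)) (mul_nonneg hc_neg (hP₀ z)), ?_⟩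
  ext z
  simp only [Pi.add_apply, Pi.sub_apply, AffineMap.coe_smul, Pi.smul_apply, smul_eq_mul]
  linear_combination (P z - N z) * (posPart_sub_negPart c).symm

lemma sum {ι : Type*} (t : Finset ι) {f : ι → E → ℝ}
    (hf : ∀ i ∈ t, IsDCWithAffineMinorants (f i)) :
    IsDCWithAffineMinorants fun z => ∑ i ∈ t, f i z := by
  classical
  induction t using Finset.induction_on with
  | empty =>
    exact ⟨0, 0, 0, convexOn_const 0 convex_univ, convexOn_const 0 convex_univ, le_rfl, le_rfl,
      by ext; simp⟩
  | insert i t hi ih =>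
    simp_rw [Finset.sum_insert hi]
    exact (hf i (Finset.mem_insert_self i t)).add
      (ih fun j hj => hf j (Finset.mem_insert_of_mem hj))

lemma comp_affineMap {f : F → ℝ} (hf : IsDCWithAffineMinorants f) (w : E →ᵃ[ℝ] F) :
    IsDCWithAffineMinorants fun z => f (w z) := by
  obtain ⟨P, N, A, hP, hN, hP₀, hN₀, rfl⟩ := hf
  refine ⟨P ∘ w, N ∘ w, A.comp w, by simpa using hP.comp_affineMap w,
    by simpa using hN.comp_affineMap w, fun z => hP₀ (w z), fun z => hN₀ (w z), ?_⟩
  ext z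
  simp

end IsDCWithAffineMinorants

theorem ConvexOn.isDCWithAffineMinorants {q : ℝ → ℝ} (hq : ConvexOn ℝ univ q) :
    IsDCWithAffineMinorants q := by
  obtain ⟨c, hc⟩ := hq.exists_forall_add_mul_sub_le 0
  let A : ℝ →ᵃ[ℝ] ℝ := c • AffineMap.id ℝ ℝ + AffineMap.const ℝ ℝ (q 0)
  have hA : ∀ t, A t = c * t + q 0 := fun t => by simp [A]
  refine ⟨q - A, 0, A, hq.sub A.concaveOn, convexOn_const 0 convex_univ, fun t => ?_, le_rfl,
    by abel⟩
  have := hc t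
  simp only [Pi.zero_apply, Pi.sub_apply, hA]
  linarith

theorem ConvexOn.isDC_comp {L : ℝ → ℝ} (hL : ConvexOn ℝ univ L) {f : E → ℝ}
    (hf : IsDCWithAffineMinorants f) : IsDC fun z => L (f z) := by
  obtain ⟨φ, ψ, c, hφ, hφm, hψ, hψm, hL_eq⟩ := hL.exists_monotone_decomposition
  have hf_DC := hf.isDC
  obtain ⟨P, N, A, hP, hN, hP₀, hN₀, rfl⟩ := hf
  have hφ_DC := hφm.isDC_comp_sub hφ (hP.add A.convexOn) hN hN₀
  have hψ_DC := hψm.isDC_comp_sub hψ (hN.sub A.concaveOn) hP hP₀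
  have hconst : IsDC fun _ : E => -L 0 := IsDC.of_convexOn (convexOn_const _ convex_univ)
  convert ((hφ_DC.add hψ_DC).add (hf_DC.const_mul c)).add hconst using 1
  ext z
  simp only [Pi.add_apply, Pi.sub_apply]
  rw [hL_eq]
  ring_nf

end DC

theorem stmt_0_general
    (n N m : ℕ)
    (x : Fin m → Fin n → ℝ) (y : Fin m → ℝ)
    (s : Fin N → ℝ)
    (L q : ℝ → ℝ)
    (hL : ConvexOn ℝ Set.univ L)
    (hq : ConvexOn ℝ Set.univ q)
    (ν : ℝ) :
    ∃ g h : (Fin N → Fin n → ℝ) × (Fin N → ℝ) → ℝ,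
      ConvexOn ℝ Set.univ g ∧ ConvexOn ℝ Set.univ h ∧
      ∀ U : Fin N → Fin n → ℝ, ∀ v : Fin N → ℝ,
        (∑ i, L (y i * ∑ j, s j * q ((∑ k, U j k * x i k) - v j))
            + ν / 2 * ∑ j, (v j) ^ 2)
          = g (U, v) - h (U, v) := by
  let w (i : Fin m) (j : Fin N) : (Fin N → Fin n → ℝ) × (Fin N → ℝ) →ᵃ[ℝ] ℝ :=
    ((∑ k, x i k • (LinearMap.proj k ∘ₗ LinearMap.proj j ∘ₗ
      LinearMap.fst ℝ (Fin N → Fin n → ℝ) (Fin N → ℝ))) -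
      LinearMap.proj j ∘ₗ LinearMap.snd ℝ (Fin N → Fin n → ℝ) (Fin N → ℝ)).toAffineMap
  have hw : ∀ i j z, w i j z = ∑ k, z.1 j k * x i k - z.2 j := by
    intro i j z
    simp [w, mul_comm]
  have hloss : ∀ i, IsDC fun z => L (y i * ∑ j, s j * q (w i j z)) := fun i =>
    hL.isDC_comp <| (IsDCWithAffineMinorants.sum Finset.univ fun j _ =>
      (hq.isDCWithAffineMinorants.comp_affineMap (w i j)).const_mul (s j)).const_mul (y i)
  have hreg : IsDC fun z : (Fin N → Fin n → ℝ) × (Fin N → ℝ) => ν / 2 * ∑ j, z.2 j ^ 2 :=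
    (IsDC.sum Finset.univ fun j _ => IsDC.of_convexOn <| by
      have h := (even_two.convexOn_pow (𝕜 := ℝ)).comp_linearMap
        (LinearMap.proj j ∘ₗ LinearMap.snd ℝ (Fin N → Fin n → ℝ) (Fin N → ℝ))
      rwa [preimage_univ] at h).const_mul (ν / 2)
  obtain ⟨g, h, hg, hh, hgh⟩ := (IsDC.sum Finset.univ fun i _ => hloss i).add hreg
  exact ⟨g, h, hg, hh, fun U v => by simpa [hw] using congrFun hgh (U, v)⟩

/-- For convex `L`, convex `q`, and `ν ≥ 0`, the objective of problem (P),
`F(U, v) = ∑ i, L (y i * ∑ j, s j * q (⟨u j, x i⟩ - v j)) + (ν/2) * ‖v‖₂²`,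
is a DC function on `ℝ^{n×N} × ℝ^N`: it is the difference of two convex functions. -/
theorem stmt_0
    (n N m : ℕ)
    (x : Fin m → Fin n → ℝ) (y : Fin m → ℝ)
    (hy : ∀ i, y i = 1 ∨ y i = -1)
    (s : Fin N → ℝ)
    (hs : ∀ j, s j = 1 ∨ s j = -1)
    (L q : ℝ → ℝ)
    (hL : ConvexOn ℝ Set.univ L)
    (hq : ConvexOn ℝ Set.univ q)
    (ν : ℝ) (hν : 0 ≤ ν) :
    ∃ g h : (Fin N → Fin n → ℝ) × (Fin N → ℝ) → ℝ,
      ConvexOn ℝ Set.univ g ∧ ConvexOn ℝ Set.univ h ∧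
      ∀ U : Fin N → Fin n → ℝ, ∀ v : Fin N → ℝ,
        (∑ i, L (y i * ∑ j, s j * q ((∑ k, U j k * x i k) - v j))
            + ν / 2 * ∑ j, (v j) ^ 2)
          = g (U, v) - h (U, v) :=
  stmt_0_general n N m x y s L q hL hq ν
end

section
/- Let L(x) = max(0, 1 − x) be the hinge loss and let q : ℝ → ℝ be any function. Then for all (U, v) ∈ ℝ^{n×N} × ℝ^N, the objective of problem (P) satisfies Σ_{i=1}^m L(y_i · Σ_{j=1}^N s_j · q(⟨u_j, x_i⟩ − v_j)) + (ν/2)·‖v‖₂² = g(U, v) − h(U, v), where g(U, v) = (ν/2)·‖v‖₂² + Σ_{i=1}^m max( Σ_{j : s_j = y_i} q(⟨u_j, x_i⟩ − v_j), 1 + Σ_{j : s_j ≠ y_i} q(⟨u_j, x_i⟩ − v_j) ) and h(U, v) = Σ_{i=1}^m Σ_{j : s_j = y_i} q(⟨u_j, x_i⟩ − v_j). -/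
/-- With the hinge loss `L(x) = max (0, 1 - x)` and any `q : ℝ → ℝ`, the
objective of problem (P) equals `g - h`, where
`g(U,v) = (ν/2)‖v‖₂² + ∑ i, max (∑_{j : s j = y i} q(⟨u j, x i⟩ - v j),
                                 1 + ∑_{j : s j ≠ y i} q(⟨u j, x i⟩ - v j))`
and `h(U,v) = ∑ i, ∑_{j : s j = y i} q(⟨u j, x i⟩ - v j)`. -/
theorem stmt_1
    (n N m : ℕ)
    (x : Fin m → Fin n → ℝ) (y : Fin m → ℝ)
    (hy : ∀ i, y i = 1 ∨ y i = -1)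
    (s : Fin N → ℝ)
    (hs : ∀ j, s j = 1 ∨ s j = -1)
    (q : ℝ → ℝ) (ν : ℝ) :
    ∀ U : Fin N → Fin n → ℝ, ∀ v : Fin N → ℝ,
      (∑ i, max 0 (1 - y i * ∑ j, s j * q ((∑ k, U j k * x i k) - v j))
          + ν / 2 * ∑ j, (v j) ^ 2)
        =
      (ν / 2 * ∑ j, (v j) ^ 2
          + ∑ i, max
              (∑ j ∈ Finset.univ.filter (fun j => s j = y i),
                  q ((∑ k, U j k * x i k) - v j))
              (1 + ∑ j ∈ Finset.univ.filter (fun j => s j ≠ y i),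
                  q ((∑ k, U j k * x i k) - v j)))
        -
      (∑ i, ∑ j ∈ Finset.univ.filter (fun j => s j = y i),
          q ((∑ k, U j k * x i k) - v j)) := by
  intro U v
  have key : ∀ i : Fin m,
      max 0 (1 - y i * ∑ j, s j * q ((∑ k, U j k * x i k) - v j))
      = max (∑ j ∈ Finset.univ.filter (fun j => s j = y i), q ((∑ k, U j k * x i k) - v j))
            (1 + ∑ j ∈ Finset.univ.filter (fun j => s j ≠ y i), q ((∑ k, U j k * x i k) - v j))
        - ∑ j ∈ Finset.univ.filter (fun j => s j = y i), q ((∑ k, U j k * x i k) - v j) := by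
    intro i
    set A := ∑ j ∈ Finset.univ.filter (fun j => s j = y i), q ((∑ k, U j k * x i k) - v j) with hA
    set B := ∑ j ∈ Finset.univ.filter (fun j => s j ≠ y i), q ((∑ k, U j k * x i k) - v j) with hB
    have hsum : y i * ∑ j, s j * q ((∑ k, U j k * x i k) - v j) = A - B := by
      rw [Finset.mul_sum,
        ← Finset.sum_filter_add_sum_filter_not Finset.univ (fun j => s j = y i)]
      have h1 : ∑ j ∈ Finset.univ.filter (fun j => s j = y i),
          y i * (s j * q ((∑ k, U j k * x i k) - v j)) = A := by
        apply Finset.sum_congr rfl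
        intro j hj
        simp only [Finset.mem_filter] at hj
        rcases hy i with h | h <;> rw [hj.2, h] <;> ring
      have h2 : ∑ j ∈ Finset.univ.filter (fun j => ¬ s j = y i),
          y i * (s j * q ((∑ k, U j k * x i k) - v j)) = -B := by
        rw [hB, ← Finset.sum_neg_distrib]
        apply Finset.sum_congr rfl
        intro j hj
        simp only [Finset.mem_filter] at hj
        rcases hy i with h | h <;> rcases hs j with h' | h' <;>
          first
          | (exfalso; exact hj.2 (h'.trans h.symm))
          | (rw [h, h']; ring)
      rw [h1, h2]; ring
    rw [hsum]
    rcases le_total A (1 + B) with h | h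
    · rw [max_eq_right (by linarith : (0:ℝ) ≤ 1 - (A - B)), max_eq_right h]; ring
    · rw [max_eq_left (by linarith : 1 - (A - B) ≤ (0:ℝ)), max_eq_left h]; ring
  rw [Finset.sum_congr rfl (fun i _ => key i), Finset.sum_sub_distrib]
  ring
end
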